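/- arXiv:1912.05253 — 2 statements merged into one kernel-verified Lean document; each statement's English description precedes it below -/
import Mathlib

section
/- Let 0 < i < n and suppose i0 occurs in W_n^(k) at positions t, t+1 (i.e., W_n^(k)[t] = i and W_n^(k)[t+1] = 0). Then the factor of W_n^(k) of length |W_i^(k)| ending at position t equals W_i^(k); that is, every occurrence of the digit i followed by 0 in W_n^(k) arises as the last digit of an occurrence of the factor W_i^(k). -/
def kbon (k : ℕ) (n : ℕ) : ℕ :=
  if _h1 : n < k - 1 then 0
  else if _h2 : n = k - 1 then 1
  else ∑ i ∈ Finset.range k, kbon k (n - i - 1)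
termination_by n
decreasing_by omega

/-- The k-bonacci morphism on words over ℕ. -/
def phiW (k : ℕ) (w : List ℕ) : List ℕ :=
  w.flatMap (fun a => if a % k = k - 1 then [a + 1] else [k * (a / k), a + 1])

/-- The finite k-bonacci word over the infinite alphabet ℕ. -/
def W (k n : ℕ) : List ℕ := (phiW k)^[n] [0]

/-!
Look at the letter `b ≤ k - 2` following an occurrence of `i` in `W_{n+1} = φ(W_n)`. The only
length-two images are `φ(a) = (k⌊a/k⌋)(a+1)`, and if `i` were their first letter then `b = a + 1`
would force `a < k` and `i = 0`. Otherwise `i = a + 1` is the last letter of some `φ(a)`, and `b`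
is the first letter of `φ(c)` for the letter `c` following `a` in `W_n`; a first letter `≤ k - 2`
only comes from a letter `c ≤ k - 2`. By induction on `n`, `W_a` ends at this occurrence of `a`,
so `W_{a+1} = φ(W_a)` ends at the occurrence of `i = a + 1`. The case `i = 0` is trivial since
`W_0 = 0`.
-/

theorem List.exists_of_flatMap_eq_append_cons {α β : Type*} (f : α → List β) :
    ∀ (w : List α) (u r : List β) (x : β), w.flatMap f = u ++ x :: r →
      ∃ w₁ a w₂ p q, w = w₁ ++ a :: w₂ ∧ f a = p ++ x :: q ∧
        u = w₁.flatMap f ++ p ∧ r = q ++ w₂.flatMap f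
  | [], _, _, _, h => by simp at h
  | a :: w, u, r, x, h => by
    rw [List.flatMap_cons, List.append_eq_append_iff] at h
    rcases h with ⟨u', rfl, h⟩ | ⟨_ | ⟨y, q⟩, hfa, h⟩
    · obtain ⟨w₁, b, w₂, p, q, rfl, hfb, rfl, rfl⟩ :=
        exists_of_flatMap_eq_append_cons f w u' r x h
      exact ⟨a :: w₁, b, w₂, p, q, rfl, hfb, by simp, rfl⟩
    · obtain ⟨w₁, b, w₂, p, q, rfl, hfb, hp, rfl⟩ :=
        exists_of_flatMap_eq_append_cons f w [] r x h.symm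
      obtain ⟨hw₁, rfl⟩ := List.append_eq_nil_iff.mp hp.symm
      exact ⟨a :: w₁, b, w₂, [], q, rfl, hfb, by simpa [hw₁] using hfa.symm, rfl⟩
    · obtain ⟨rfl, rfl⟩ := List.cons_eq_cons.mp h
      exact ⟨[], a, w, u, q, rfl, hfa, by simp, rfl⟩

theorem List.eq_take_append_cons_cons_drop {α : Type*} {l : List α} {t : ℕ} {x y : α}
    (hx : l[t]? = some x) (hy : l[t + 1]? = some y) :
    l = l.take t ++ x :: y :: l.drop (t + 2) := by
  obtain ⟨ht, rfl⟩ := List.getElem?_eq_some_iff.mp hx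
  obtain ⟨ht', rfl⟩ := List.getElem?_eq_some_iff.mp hy
  rw [List.cons_getElem_drop_succ, List.cons_getElem_drop_succ, List.take_append_drop]

theorem List.IsSuffix.length_le_and_take_drop_eq {α : Type*} {l s : List α} {m : ℕ}
    (h : s <:+ l.take m) (hm : m ≤ l.length) :
    s.length ≤ m ∧ (l.drop (m - s.length)).take s.length = s := by
  obtain ⟨z, hz⟩ := h
  have hlen : z.length + s.length = m := by
    simpa [hm] using congrArg List.length hz
  refine ⟨by omega, ?_⟩
  rw [← List.take_append_drop m l, ← hz, List.append_assoc, show m - s.length = z.length by omega,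
    List.drop_left, List.take_left]

def phiLetter (k a : ℕ) : List ℕ :=
  if a % k = k - 1 then [a + 1] else [k * (a / k), a + 1]

theorem phiW_eq_flatMap (k : ℕ) (w : List ℕ) : phiW k w = w.flatMap (phiLetter k) := rfl

theorem W_zero (k : ℕ) : W k 0 = [0] := rfl

theorem W_succ (k n : ℕ) : W k (n + 1) = (W k n).flatMap (phiLetter k) := by
  rw [W, Function.iterate_succ_apply', ← W, phiW_eq_flatMap]

theorem phiLetter_ne_nil (k a : ℕ) : phiLetter k a ≠ [] := by
  unfold phiLetter; split_ifs <;> simp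

theorem eq_of_phiLetter_eq_append_singleton {k a x : ℕ} {p : List ℕ}
    (h : phiLetter k a = p ++ [x]) : x = a + 1 := by
  have := congrArg List.getLast? h
  unfold phiLetter at this
  split_ifs at this <;> simp_all

theorem eq_of_phiLetter_eq_append_cons_cons {k a x y : ℕ} {p q : List ℕ}
    (h : phiLetter k a = p ++ x :: y :: q) : x = k * (a / k) ∧ y = a + 1 := by
  unfold phiLetter at h
  split_ifs at h <;> rcases p with _ | ⟨_, _ | ⟨_, _⟩⟩ <;> simp_all

theorem add_two_le_of_phiLetter_eq_cons {k c b : ℕ} {r : List ℕ}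
    (h : phiLetter k c = b :: r) (hb : b + 2 ≤ k) : c + 2 ≤ k := by
  unfold phiLetter at h
  split_ifs at h with hc
  · have := Nat.mod_le c k
    simp only [List.cons.injEq] at h
    omega
  · simp only [List.cons.injEq] at h
    have hck : c / k = 0 := by
      by_contra hne
      have := Nat.le_mul_of_pos_right k (Nat.pos_of_ne_zero hne)
      omega
    rw [Nat.div_eq_zero_iff] at hck
    have := Nat.mod_eq_of_lt (hck.resolve_left (by omega))
    omega

theorem exists_eq_cons_add_two_le_of_flatMap_phiLetter_eq_cons {k b : ℕ} {w v : List ℕ}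
    (h : w.flatMap (phiLetter k) = b :: v) (hb : b + 2 ≤ k) :
    ∃ c w', w = c :: w' ∧ c + 2 ≤ k := by
  rcases w with _ | ⟨c, w⟩
  · simp at h
  obtain ⟨x, r, hxr⟩ := List.exists_cons_of_ne_nil (phiLetter_ne_nil k c)
  rw [List.flatMap_cons, hxr, List.cons_append, List.cons_eq_cons] at h
  obtain ⟨rfl, -⟩ := h
  exact ⟨c, w, rfl, add_two_le_of_phiLetter_eq_cons hxr hb⟩

theorem W_isSuffix_of_eq_append_cons_cons {k : ℕ} :
    ∀ {n i b : ℕ} {u v : List ℕ}, W k n = u ++ i :: b :: v → b + 2 ≤ k →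
      W k i <:+ u ++ [i]
  | 0, _, _, u, v, h, _ => by
    have := congrArg List.length h
    simp [W_zero] at this
    omega
  | n + 1, i, b, _, v, h, hb => by
    rw [W_succ] at h
    obtain ⟨w₁, a, w₂, p, q, hw, hfa, rfl, hq⟩ :=
      List.exists_of_flatMap_eq_append_cons (phiLetter k) (W k n) _ (b :: v) i h
    rcases q with _ | ⟨y, q⟩
    · obtain rfl := eq_of_phiLetter_eq_append_singleton hfa
      obtain ⟨c, w₂, rfl, hc⟩ :=
        exists_eq_cons_add_two_le_of_flatMap_phiLetter_eq_cons hq.symm hb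
      have hWa : W k a <:+ w₁ ++ [a] := W_isSuffix_of_eq_append_cons_cons hw hc
      simpa [W_succ, hfa] using hWa.flatMap (phiLetter k)
    · obtain ⟨rfl, rfl⟩ := eq_of_phiLetter_eq_append_cons_cons hfa
      obtain rfl : b = a + 1 := (List.cons_eq_cons.mp hq).1
      rw [Nat.div_eq_of_lt (by omega : a < k), Nat.mul_zero]
      exact List.suffix_append _ _

theorem i0_occurrence_ends_Wi_general (k i n t : ℕ) (hk : 2 < k)
    (h1 : (W k n)[t]? = some i) (h2 : (W k n)[t + 1]? = some 0) :
    (W k i).length ≤ t + 1 ∧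
    ((W k n).drop (t + 1 - (W k i).length)).take (W k i).length = W k i := by
  have hsuf : W k i <:+ (W k n).take t ++ [i] :=
    W_isSuffix_of_eq_append_cons_cons (List.eq_take_append_cons_cons_drop h1 h2) (by omega)
  rw [← Option.toList_some, ← h1, ← List.take_add_one] at hsuf
  exact hsuf.length_le_and_take_drop_eq (List.getElem?_eq_some_iff.mp h2).1.le

theorem i0_occurrence_ends_Wi (k i n t : ℕ) (hk : 2 < k) (hi0 : 0 < i) (hin : i < n)
    (h1 : (W k n)[t]? = some i) (h2 : (W k n)[t + 1]? = some 0) :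
    (W k i).length ≤ t + 1 ∧
    ((W k n).drop (t + 1 - (W k i).length)).take (W k i).length = W k i :=
  i0_occurrence_ends_Wi_general k i n t hk h1 h2
end

section
/- Let k ≥ 3 and n > 2k-1. Then |W_{n-k}^(k)| ≥ 3|W_{n-2k+1}^(k)|. -/
/-!
Let `c_r(w)` count the letters of `w` congruent to `r` mod `k`. A letter `a` of residue `k - 1`
becomes the single letter `a + 1` of residue `0`; any other letter becomes a letter of residue `0`
followed by one of residue `a % k + 1`. Hence `|φ w| = 2|w| - c_{k-1}(w)`, `c_0(φ w) = |w|` and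
`c_{r+1}(φ w) = c_r(w)`, so that `|W_{m+2}| = 4|W_m| - 2 c_{k-1}(W_m) - c_{k-2}(W_m)`.
For `k ≥ 3` the residues `0, k - 2, k - 1` are distinct and `c_{k-1}(W_m) ≤ c_0(W_m)`, whence
`|W_{m+2}| ≥ 3|W_m|`; the lengths are monotone and `n - k ≥ (n - 2k + 1) + 2`.
-/

lemma succ_mod_of_mod_eq_pred {k a : ℕ} (hk : 0 < k) (h : a % k = k - 1) : (a + 1) % k = 0 := by
  rcases Nat.lt_or_ge 1 k with hk1 | hk1
  · rw [Nat.add_mod, h, Nat.mod_eq_of_lt hk1, Nat.sub_add_cancel hk, Nat.mod_self]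
  · obtain rfl : k = 1 := by omega
    exact Nat.mod_one _

lemma succ_mod_of_mod_ne_pred {k a : ℕ} (h : a % k ≠ k - 1) : (a + 1) % k = a % k + 1 := by
  rcases Nat.eq_zero_or_pos k with rfl | hk
  · simp
  · have := Nat.mod_lt a hk
    rw [Nat.add_mod, Nat.mod_eq_of_lt (a := 1) (by omega), Nat.mod_eq_of_lt (by omega)]

def countMod (k r : ℕ) (w : List ℕ) : ℕ := w.countP (· % k = r)

lemma sum_countMod_le (k : ℕ) (s : Finset ℕ) (w : List ℕ) :
    ∑ r ∈ s, countMod k r w ≤ w.length := by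
  induction w with
  | nil => simp [countMod]
  | cons a w ih =>
    have hsingle : ∑ r ∈ s, (if a % k = r then 1 else 0) ≤ 1 := by
      rw [Finset.sum_ite_eq]; split_ifs <;> omega
    simp only [countMod, List.countP_cons, decide_eq_true_eq, Finset.sum_add_distrib,
      List.length_cons] at ih ⊢
    omega

lemma phiW_cons (k a : ℕ) (w : List ℕ) :
    phiW k (a :: w) = (if a % k = k - 1 then [a + 1] else [k * (a / k), a + 1]) ++ phiW k w :=
  List.flatMap_cons

lemma length_phiW_add_countMod (k : ℕ) (w : List ℕ) :
    (phiW k w).length + countMod k (k - 1) w = 2 * w.length := by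
  induction w with
  | nil => simp [phiW, countMod]
  | cons a w ih =>
    simp only [countMod, phiW_cons, List.length_append, List.countP_cons] at *
    by_cases h : a % k = k - 1 <;> simp [h] <;> omega

lemma countMod_phiW_zero (k : ℕ) (hk : 0 < k) (w : List ℕ) :
    countMod k 0 (phiW k w) = w.length := by
  induction w with
  | nil => simp [phiW, countMod]
  | cons a w ih =>
    simp only [countMod, phiW_cons, List.countP_append] at *
    split_ifs with h
    · simp [succ_mod_of_mod_eq_pred hk h, ih, add_comm]
    · simp [succ_mod_of_mod_ne_pred h, ih, add_comm]

lemma countMod_phiW_succ (k r : ℕ) (hr : r + 1 < k) (w : List ℕ) :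
    countMod k (r + 1) (phiW k w) = countMod k r w := by
  induction w with
  | nil => simp [phiW, countMod]
  | cons a w ih =>
    simp only [countMod, phiW_cons, List.countP_append] at *
    by_cases h : a % k = k - 1
    · simp [h, succ_mod_of_mod_eq_pred (by omega) h, List.countP_cons, ih]
      omega
    · simp [h, succ_mod_of_mod_ne_pred h, List.countP_cons, ih, add_comm]

lemma W_succ_s15 (k m : ℕ) : W k (m + 1) = phiW k (W k m) :=
  Function.iterate_succ_apply' _ _ _

lemma length_W_mono (k : ℕ) : Monotone fun m ↦ (W k m).length :=
  monotone_nat_of_le_succ fun m ↦ by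
    have := length_phiW_add_countMod k (W k m)
    have : countMod k (k - 1) (W k m) ≤ (W k m).length := List.countP_le_length
    rw [W_succ_s15]
    omega

lemma countMod_W_pred_le_countMod_W_zero (k : ℕ) (hk : 2 ≤ k) (m : ℕ) :
    countMod k (k - 1) (W k m) ≤ countMod k 0 (W k m) := by
  cases m with
  | zero => simp [W, countMod, show 0 ≠ k - 1 by omega]
  | succ m =>
    obtain ⟨r, rfl⟩ : ∃ r, k = r + 2 := ⟨k - 2, by omega⟩
    rw [W_succ_s15, countMod_phiW_zero _ (by omega), show r + 2 - 1 = r + 1 by omega,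
      countMod_phiW_succ _ _ (by omega)]
    exact List.countP_le_length

theorem three_mul_length_W_le (k : ℕ) (hk : 3 ≤ k) (m : ℕ) :
    3 * (W k m).length ≤ (W k (m + 2)).length := by
  have hstep₁ := length_phiW_add_countMod k (W k m)
  have hstep₂ := length_phiW_add_countMod k (W k (m + 1))
  have hshift : countMod k (k - 1) (W k (m + 1)) = countMod k (k - 2) (W k m) := by
    rw [W_succ_s15, show k - 1 = k - 2 + 1 by omega, countMod_phiW_succ _ _ (by omega)]
  have hle := countMod_W_pred_le_countMod_W_zero k (by omega) m
  have hsum := sum_countMod_le k {0, k - 2, k - 1} (W k m)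
  rw [Finset.sum_insert (by simp; omega), Finset.sum_pair (by omega)] at hsum
  rw [← W_succ_s15] at hstep₁ hstep₂
  change 3 * _ ≤ (W k (m + 1 + 1)).length
  omega

theorem three_W_length (k n : ℕ) (hk : 3 ≤ k) (hn : 2 * k - 1 < n) :
    3 * (W k (n - 2 * k + 1)).length ≤ (W k (n - k)).length :=
  (three_mul_length_W_le k hk _).trans (length_W_mono k (by omega))
end
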